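/- For every positive integer n, T(n) ≤ C(n, ⌊n/2⌋), the central binomial coefficient of n. -/

import Mathlib

/-- `f (a₁,…,a_k)` defined by `f(a₁) = a₁`, `f(a₁,…,a_{i+1}) = (f(a₁,…,a_i) + 1) · a_{i+1}`. -/
def f (l : List ℕ) : ℕ := l.foldl (fun acc a => (acc + 1) * a) 0

/-- `T n` is the number of nonempty finite sequences of positive integers with `f A = n`,
with the additional convention `T 0 = 1`. -/
noncomputable def T : ℕ → ℕ
  | 0 => 1
  | n + 1 => Nat.card {l : List ℕ // l ≠ [] ∧ (∀ a ∈ l, 0 < a) ∧ f l = n + 1}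

/-!
Splitting off the last entry `a` of a sequence `A = A' ++ [a]` with `f A = n` gives
`n = (f A' + 1) * a`, so `A` is determined by the divisor `d = f A' + 1` of `n` together with a
sequence `A'` with `f A' = d - 1` (the empty sequence when `d = 1`). Hence
`T n ≤ T (n - 1) + ∑ T (d - 1)` over the proper divisors `d` of `n`. Every proper divisor is at
most `n / 2`, so by strong induction the sum is at most `∑_{j < n/2} C(j, ⌊j/2⌋) < 2 ^ (n/2)`,
and Pascal's rule shows `C(n - 1, ⌊(n-1)/2⌋) + 2 ^ (n/2) ≤ C(n, ⌊n/2⌋) + 1`.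
-/

open Finset

lemma f_append (l : List ℕ) (a : ℕ) : f (l ++ [a]) = (f l + 1) * a := by
  simp [f, List.foldl_append]

def posFiber (m : ℕ) : Set (List ℕ) := {l | (∀ a ∈ l, 0 < a) ∧ f l = m}

lemma posFiber_zero : posFiber 0 = {[]} := by
  ext l
  rcases l.eq_nil_or_concat' with rfl | ⟨l, a, rfl⟩
  · simp [posFiber, f]
  · simp only [posFiber, f_append, Set.mem_ofPred_eq, Set.mem_singleton_iff]
    refine iff_of_false (fun ⟨hpos, h0⟩ => ?_) (by simp)
    simp [(hpos a (by simp)).ne'] at h0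

lemma posFiber_subset_biUnion {n : ℕ} (hn : n ≠ 0) :
    posFiber n ⊆ ⋃ d ∈ n.divisors, (· ++ [n / d]) '' posFiber (d - 1) := by
  rintro l ⟨hpos, rfl⟩
  rcases l.eq_nil_or_concat' with rfl | ⟨l, a, rfl⟩
  · simp [f] at hn
  rw [f_append] at hn ⊢
  simp only [Set.mem_iUnion, Set.mem_image, Nat.mem_divisors]
  refine ⟨f l + 1, ⟨dvd_mul_right _ _, hn⟩, l,
    ⟨fun b hb => hpos b (by simp [hb]), by simp⟩, ?_⟩
  rw [Nat.mul_div_cancel_left _ (Nat.succ_pos _)]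

lemma posFiber_finite (n : ℕ) : (posFiber n).Finite := by
  induction n using Nat.strong_induction_on with
  | _ n ih =>
  rcases eq_or_ne n 0 with rfl | hn
  · simp [posFiber_zero]
  refine Set.Finite.subset (n.divisors.finite_toSet.biUnion fun d hd => (ih _ ?_).image _)
    (posFiber_subset_biUnion hn)
  have := Nat.divisor_le hd
  have := Nat.pos_of_mem_divisors hd
  omega

lemma ncard_posFiber (m : ℕ) : (posFiber m).ncard = T m := by
  rcases m with _ | n
  · simp [posFiber_zero, T]
  rw [T, ← Nat.card_coe_set_eq]
  refine Nat.card_congr (Equiv.subtypeEquivRight fun l => ?_)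
  simp only [posFiber, Set.mem_ofPred_eq, ne_eq, iff_and_self, and_imp]
  rintro - hf rfl
  simp [f] at hf

lemma T_le_sum_divisors {n : ℕ} (hn : n ≠ 0) : T n ≤ ∑ d ∈ n.divisors, T (d - 1) := by
  simp only [← ncard_posFiber]
  calc (posFiber n).ncard
      ≤ (⋃ d ∈ n.divisors, (· ++ [n / d]) '' posFiber (d - 1)).ncard :=
        Set.ncard_le_ncard (posFiber_subset_biUnion hn)
          (n.divisors.finite_toSet.biUnion fun d _ => (posFiber_finite _).image _)
    _ ≤ ∑ d ∈ n.divisors, ((· ++ [n / d]) '' posFiber (d - 1)).ncard :=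
        n.divisors.set_ncard_biUnion_le _
    _ = ∑ d ∈ n.divisors, (posFiber (d - 1)).ncard := by
        simp only [Set.ncard_image_of_injective _ (List.append_left_injective _)]

lemma sum_properDivisors_pred_le {M : Type*} [AddCommMonoid M] [PartialOrder M]
    [CanonicallyOrderedAdd M] (n : ℕ) (g : ℕ → M) :
    ∑ d ∈ n.properDivisors, g (d - 1) ≤ ∑ j ∈ range (n / 2), g j := by
  rw [← sum_image fun d hd e he (h : d - 1 = e - 1) => by
    have := Nat.pos_of_mem_properDivisors hd
    have := Nat.pos_of_mem_properDivisors he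
    omega]
  refine sum_le_sum_of_subset (image_subset_iff.2 fun d hd => ?_)
  have hd_le : d * 2 ≤ n := calc
    d * 2 ≤ d * (n / d) := Nat.mul_le_mul_left d (Nat.one_lt_div_of_mem_properDivisors hd)
    _ ≤ n := Nat.mul_div_le n d
  have := Nat.pos_of_mem_properDivisors hd
  rw [mem_range]
  omega

lemma sum_choose_half_lt_two_pow (k : ℕ) : ∑ j ∈ range k, j.choose (j / 2) < 2 ^ k :=
  (sum_le_sum fun j _ => Nat.choose_le_two_pow j _).trans_lt
    (Nat.geomSum_lt le_rfl fun _ => mem_range.1)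

lemma two_pow_succ_le_choose_add_one (k : ℕ) : 2 ^ (k + 1) ≤ (2 * k + 1).choose k + 1 := by
  induction k with
  | zero => simp
  | succ k ih =>
    have pascal :
        (2 * k + 3).choose (k + 1) = (2 * k + 2).choose (k + 1) + (2 * k + 2).choose k := by
      rw [Nat.choose_succ_succ' (2 * k + 2) k]; ring
    have central : (2 * k + 2).choose (k + 1) = 2 * (2 * k + 1).choose k := by
      rw [Nat.choose_succ_succ' (2 * k + 1) k, Nat.choose_symm_half k]; ring
    have : 0 < (2 * k + 2).choose k := Nat.choose_pos (by omega)
    rw [pow_succ, show 2 * (k + 1) + 1 = 2 * k + 3 by ring, pascal, central]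
    omega

lemma choose_half_add_two_pow_le (n : ℕ) :
    n.choose (n / 2) + 2 ^ ((n + 1) / 2) ≤ (n + 1).choose ((n + 1) / 2) + 1 := by
  obtain ⟨k, rfl | rfl⟩ := Nat.even_or_odd' n
  · rcases k with _ | k
    · simp
    have pascal :
        (2 * k + 3).choose (k + 1) = (2 * k + 2).choose k + (2 * k + 2).choose (k + 1) :=
      Nat.choose_succ_succ' _ _
    have := Nat.choose_le_choose k (show 2 * k + 1 ≤ 2 * k + 2 by omega)
    have := two_pow_succ_le_choose_add_one k
    rw [show (2 * (k + 1) + 1) / 2 = k + 1 by omega, show 2 * (k + 1) / 2 = k + 1 by omega,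
      show 2 * (k + 1) + 1 = 2 * k + 3 by ring, show 2 * (k + 1) = 2 * k + 2 by ring, pascal]
    omega
  · have central : (2 * k + 2).choose (k + 1) = 2 * (2 * k + 1).choose k := by
      rw [Nat.choose_succ_succ' (2 * k + 1) k, Nat.choose_symm_half k]; ring
    have := two_pow_succ_le_choose_add_one k
    rw [show (2 * k + 1 + 1) / 2 = k + 1 by omega, show (2 * k + 1) / 2 = k by omega, central]
    omega

theorem T_le_central_binom_general (n : ℕ) : T n ≤ n.choose (n / 2) := by
  induction n using Nat.strong_induction_on with
  | _ n ih =>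
  rcases n with _ | n
  · simp [T]
  have hrec := T_le_sum_divisors (Nat.add_one_ne_zero n)
  rw [← Nat.cons_self_properDivisors (Nat.add_one_ne_zero n), sum_cons, Nat.add_sub_cancel]
    at hrec
  have hproper : ∑ d ∈ (n + 1).properDivisors, T (d - 1) < 2 ^ ((n + 1) / 2) := calc
    _ ≤ ∑ d ∈ (n + 1).properDivisors, (d - 1).choose ((d - 1) / 2) :=
        sum_le_sum fun d hd => ih _ (by have := (Nat.mem_properDivisors.1 hd).2; omega)
    _ ≤ ∑ j ∈ range ((n + 1) / 2), j.choose (j / 2) :=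
        sum_properDivisors_pred_le _ fun j => j.choose (j / 2)
    _ < 2 ^ ((n + 1) / 2) := sum_choose_half_lt_two_pow _
  have hprev := ih n n.lt_succ_self
  have hpascal := choose_half_add_two_pow_le n
  omega

theorem T_le_central_binom (n : ℕ) (hn : 0 < n) :
    T n ≤ n.choose (n / 2) :=
  T_le_central_binom_general n
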